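/- arXiv:2603.00836 — 5 statements merged into one kernel-verified Lean document; each statement's English description precedes it below -/
import Mathlib

section
/- Let L denote the Rogers dilogarithm and let j = (1/2)·sec(2π/9). Then 19·L(j) + L((1 − j)³·j²) = 2π². -/
open Real Set Filter Topology

/-- The real dilogarithm `Li₂(z) = ∑_{n=1}^∞ zⁿ/n²`. -/
noncomputable def dilog (z : ℝ) : ℝ := ∑' n : ℕ, z ^ (n + 1) / ((n : ℝ) + 1) ^ 2

/-- The (non-normalized) Rogers dilogarithm `L(z) = Li₂(z) + (1/2) log z log (1 - z)`. -/
noncomputable def rogersL (z : ℝ) : ℝ := dilog z + 1 / 2 * Real.log z * Real.log (1 - z)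

lemma sum_inv_sq : Summable (fun n : ℕ => 1 / ((n : ℝ) + 1) ^ 2) := by
  have := Real.summable_one_div_nat_pow.2 (le_refl 2)
  exact_mod_cast (summable_nat_add_iff 1).2 this

lemma dilog_term_bound {x : ℝ} (hx : |x| ≤ 1) (n : ℕ) :
    ‖x ^ (n + 1) / ((n : ℝ) + 1) ^ 2‖ ≤ 1 / ((n : ℝ) + 1) ^ 2 := by
  have h1 : (0:ℝ) < ((n : ℝ) + 1) ^ 2 := by positivity
  rw [norm_div, norm_pow, Real.norm_eq_abs, Real.norm_eq_abs, abs_of_pos h1]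
  have : |x| ^ (n+1) ≤ 1 := pow_le_one₀ (abs_nonneg x) hx
  calc |x| ^ (n+1) / ((n:ℝ)+1)^2 ≤ 1 / ((n:ℝ)+1)^2 := by gcongr
    _ = 1 / ((n:ℝ)+1)^2 := rfl

lemma summable_dilog {x : ℝ} (hx : |x| ≤ 1) :
    Summable (fun n : ℕ => x ^ (n + 1) / ((n : ℝ) + 1) ^ 2) :=
  Summable.of_norm_bounded sum_inv_sq (dilog_term_bound hx)

lemma dilog_zero : dilog 0 = 0 := by
  simp [dilog]

lemma dilog_one : dilog 1 = π ^ 2 / 6 := by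
  have h := hasSum_zeta_two
  have h2 : HasSum (fun n : ℕ => (1:ℝ) / ((n:ℝ) + 1) ^ 2) (π ^ 2 / 6) := by
    have := (hasSum_nat_add_iff' (f := fun n : ℕ => (1:ℝ) / (n : ℝ) ^ 2) 1).2 h
    simpa using this
  have : dilog 1 = ∑' n : ℕ, (1:ℝ) / ((n:ℝ) + 1) ^ 2 := by
    simp [dilog]
  rw [this, h2.tsum_eq]

lemma continuousOn_dilog : ContinuousOn dilog (Icc (-1 : ℝ) 1) := by
  apply continuousOn_tsum (u := fun n : ℕ => 1 / ((n : ℝ) + 1) ^ 2)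
  · intro i
    exact (continuous_pow _).continuousOn.div_const _
  · exact sum_inv_sq
  · intro n x hx
    apply dilog_term_bound
    rw [abs_le]
    exact ⟨hx.1, hx.2⟩

lemma hasDerivAt_dilog {x : ℝ} (hx : x ∈ Ioo (0:ℝ) 1) :
    HasDerivAt dilog (-Real.log (1 - x) / x) x := by
  obtain ⟨h0, h1⟩ := hx
  set r : ℝ := (1 + x) / 2 with hr
  have hxr : x < r := by simp [hr]; linarith
  have hr1 : r < 1 := by simp [hr]; linarith
  have hr0 : 0 < r := by positivity
  have key : HasDerivAt dilog (∑' n : ℕ, x ^ n / ((n : ℝ) + 1)) x := by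
    apply hasDerivAt_tsum_of_isPreconnected
      (u := fun n : ℕ => r ^ n)
      (t := Ioo (-r) r)
      (g := fun n z => z ^ (n + 1) / ((n : ℝ) + 1) ^ 2)
      (g' := fun n z => z ^ n / ((n : ℝ) + 1))
      (y₀ := 0)
    · exact summable_geometric_of_lt_one hr0.le hr1
    · exact isOpen_Ioo
    · exact (convex_Ioo _ _).isPreconnected
    · intro n y _
      have : HasDerivAt (fun z : ℝ => z ^ (n + 1)) ((n + 1 : ℕ) * y ^ n) y := by
        simpa using hasDerivAt_pow (n + 1) y
      have h2 := this.div_const (((n : ℝ) + 1) ^ 2)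
      refine h2.congr_deriv ?_
      push_cast
      field_simp
    · intro n y hy
      have hy' : |y| ≤ r := le_of_lt (abs_lt.2 ⟨hy.1, hy.2⟩)
      have hb : |y| ^ n ≤ r ^ n := pow_le_pow_left₀ (abs_nonneg y) hy' n
      have h1n : (1:ℝ) ≤ (n : ℝ) + 1 := by
        have : (0:ℝ) ≤ (n:ℝ) := Nat.cast_nonneg n
        linarith
      rw [norm_div, Real.norm_eq_abs, Real.norm_eq_abs, abs_pow,
        abs_of_pos (by positivity : (0:ℝ) < (n:ℝ)+1)]
      calc |y| ^ n / ((n:ℝ)+1) ≤ |y| ^ n / 1 := by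
            gcongr
        _ = |y| ^ n := div_one _
        _ ≤ r ^ n := hb
    · exact mem_Ioo.2 ⟨by linarith, hr0⟩
    · simpa using summable_zero
    · exact mem_Ioo.2 ⟨by linarith, hxr⟩
  have hsum : ∑' n : ℕ, x ^ n / ((n : ℝ) + 1) = -Real.log (1 - x) / x := by
    have hls := hasSum_pow_div_log_of_abs_lt_one (x := x) (by rw [abs_lt]; constructor <;> linarith)
    have h2 : HasSum (fun n : ℕ => x * (x ^ n / ((n : ℝ) + 1))) (-Real.log (1 - x)) := by
      convert hls using 2 with n
      ring
    have h3 := (h2.div_const x)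
    have h4 : HasSum (fun n : ℕ => x ^ n / ((n : ℝ) + 1)) (-Real.log (1 - x) / x) := by
      simpa only [mul_div_cancel_left₀ _ h0.ne'] using h3
    exact h4.tsum_eq
  rwa [hsum] at key

lemma rogersL_zero : rogersL 0 = 0 := by simp [rogersL, dilog_zero]
lemma rogersL_one : rogersL 1 = π ^ 2 / 6 := by simp [rogersL, dilog_one]

lemma neg_log_one_sub_le {x : ℝ} (h0 : 0 ≤ x) (h1 : x ≤ 1/2) :
    -Real.log (1 - x) ≤ 2 * x := by
  have hx1 : (0:ℝ) < 1 - x := by linarith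
  have : Real.log ((1 - x)⁻¹) ≤ (1 - x)⁻¹ - 1 := Real.log_le_sub_one_of_pos (by positivity)
  rw [Real.log_inv] at this
  have h2 : (1 - x)⁻¹ - 1 = x / (1 - x) := by field_simp; ring
  have h3 : x / (1 - x) ≤ 2 * x := by
    rw [div_le_iff₀ hx1]
    nlinarith
  linarith

lemma tendsto_loglog_zero :
    Tendsto (fun x => Real.log x * Real.log (1 - x)) (𝓝[Icc (0:ℝ) 1] 0) (𝓝 0) := by
  apply squeeze_zero_norm' (a := fun x => 2 * ‖x * Real.log x‖)
  · filter_upwards [inter_mem_nhdsWithin (Icc 0 1) (Metric.ball_mem_nhds (0:ℝ) (by norm_num : (0:ℝ) < 1/2))] with x hx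
    obtain ⟨⟨hx0, hx1⟩, hxb⟩ := hx
    have hxh : x < 1/2 := by
      have := abs_lt.1 (by simpa [Real.dist_eq] using hxb)
      linarith [this.2]
    rcases eq_or_lt_of_le hx0 with h | h
    · simp [← h]
    · have hlx : Real.log x ≤ 0 := Real.log_nonpos hx0 (by linarith)
      have hl1x : -Real.log (1 - x) ≤ 2 * x := neg_log_one_sub_le hx0 (by linarith)
      have hl1x0 : Real.log (1 - x) ≤ 0 := Real.log_nonpos (by linarith) (by linarith)
      rw [Real.norm_eq_abs, Real.norm_eq_abs, abs_mul, abs_mul,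
        abs_of_pos h, abs_of_nonpos hlx, abs_of_nonpos hl1x0]
      nlinarith [mul_le_mul_of_nonneg_left hl1x (by linarith : (0:ℝ) ≤ -Real.log x)]
  · have : Tendsto (fun x : ℝ => x * Real.log x) (𝓝[Icc (0:ℝ) 1] 0) (𝓝 0) := by
      have hc := continuous_mul_log.tendsto 0
      simp only [Real.log_zero, mul_zero] at hc
      exact hc.mono_left nhdsWithin_le_nhds
    have := (this.norm).const_mul 2
    simpa using this

lemma tendsto_loglog_one :
    Tendsto (fun x => Real.log x * Real.log (1 - x)) (𝓝[Icc (0:ℝ) 1] 1) (𝓝 0) := by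
  have key := tendsto_loglog_zero
  have hmap : Tendsto (fun x : ℝ => 1 - x) (𝓝[Icc (0:ℝ) 1] 1) (𝓝[Icc (0:ℝ) 1] 0) := by
    apply tendsto_nhdsWithin_of_tendsto_nhds_of_eventually_within
    · have h : Continuous (fun x : ℝ => 1 - x) := continuous_const.sub continuous_id
      have := (h.tendsto (1:ℝ)).mono_left (nhdsWithin_le_nhds (s := Icc (0:ℝ) 1))
      simpa using this
    · have hmem : Icc (0:ℝ) 1 ∈ 𝓝[Icc (0:ℝ) 1] 1 := self_mem_nhdsWithin
      filter_upwards [hmem] with x hx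
      simp only [mem_Icc] at hx ⊢
      exact ⟨by linarith [hx.2], by linarith [hx.1]⟩
  have := key.comp hmap
  simp only [Function.comp_def] at this
  have heq : (fun x : ℝ => Real.log x * Real.log (1 - x)) =
      fun x : ℝ => (fun y : ℝ => Real.log y * Real.log (1 - y)) (1 - x) := by
    funext x
    simp only []
    rw [show (1:ℝ) - (1 - x) = x by ring]
    ring
  rw [heq]
  exact this

lemma continuousOn_loglog :
    ContinuousOn (fun x => Real.log x * Real.log (1 - x)) (Icc (0:ℝ) 1) := by
  intro x hx
  rcases eq_or_lt_of_le hx.1 with h0 | h0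
  · rw [ContinuousWithinAt, ← h0]
    simpa using tendsto_loglog_zero
  rcases eq_or_lt_of_le hx.2 with h1 | h1
  · rw [ContinuousWithinAt, h1]
    have := tendsto_loglog_one
    simpa using this
  · apply ContinuousAt.continuousWithinAt
    apply ContinuousAt.mul
    · exact (Real.continuousAt_log (ne_of_gt h0))
    · exact (Real.continuousAt_log (by linarith : (1:ℝ) - x ≠ 0)).comp
        ((continuous_const.sub continuous_id).continuousAt)

lemma continuousOn_rogersL : ContinuousOn rogersL (Icc (0:ℝ) 1) := by
  unfold rogersL
  apply ContinuousOn.add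
  · exact continuousOn_dilog.mono (fun x hx => ⟨by linarith [hx.1], hx.2⟩)
  · have := continuousOn_loglog
    have h2 : ContinuousOn (fun x => 1 / 2 * (Real.log x * Real.log (1 - x))) (Icc (0:ℝ) 1) :=
      this.const_smul (1/2 : ℝ)
    convert h2 using 2 with x
    ring

lemma hasDerivAt_rogersL {x : ℝ} (hx : x ∈ Set.Ioo (0:ℝ) 1) :
    HasDerivAt rogersL (-(Real.log (1 - x) / x + Real.log x / (1 - x)) / 2) x := by
  obtain ⟨h0, h1⟩ := hx
  have hd := hasDerivAt_dilog (Set.mem_Ioo.2 ⟨h0, h1⟩)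
  have hlog : HasDerivAt Real.log x⁻¹ x := Real.hasDerivAt_log (ne_of_gt h0)
  have hlog2 : HasDerivAt (fun y : ℝ => Real.log (1 - y)) (-(1 - x)⁻¹) x := by
    have hinner : HasDerivAt (fun y : ℝ => 1 - y) (-1) x := by
      simpa using (hasDerivAt_id x).const_sub (1:ℝ)
    have := (Real.hasDerivAt_log (by linarith : (1:ℝ) - x ≠ 0)).comp x hinner
    refine this.congr_deriv ?_
    ring
  have hprod := (hlog.mul hlog2).const_mul (1/2 : ℝ)
  have hsum := hd.add hprod
  have : rogersL = fun y => dilog y + 1 / 2 * (Real.log y * Real.log (1 - y)) := by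
    funext y
    unfold rogersL
    ring
  rw [this]
  refine hsum.congr_deriv ?_
  ring

lemma rogersL_reflection {x : ℝ} (h0 : 0 ≤ x) (h1 : x ≤ 1) :
    rogersL x + rogersL (1 - x) = π ^ 2 / 6 := by
  -- handle endpoints
  rcases eq_or_lt_of_le h0 with he | h0'
  · rw [← he]; simp [rogersL_zero, rogersL_one]
  rcases eq_or_lt_of_le h1 with he | h1'
  · rw [he]; simp [rogersL_zero, rogersL_one]
  -- interior: constant function argument on [x, 1]
  set g : ℝ → ℝ := fun y => rogersL y + rogersL (1 - y) with hg
  have hcont : ContinuousOn g (Icc x 1) := by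
    apply ContinuousOn.add
    · exact (continuousOn_rogersL.mono (fun y hy => ⟨by linarith [hy.1], hy.2⟩))
    · apply ContinuousOn.comp continuousOn_rogersL
        ((continuous_const.sub continuous_id).continuousOn)
      intro y hy
      exact ⟨by simp; linarith [hy.2], by simp; linarith [hy.1]⟩
  have hderiv : ∀ y ∈ Ico x 1, HasDerivWithinAt g 0 (Ici y) y := by
    intro y hy
    have hy0 : 0 < y := lt_of_lt_of_le h0' hy.1
    have hy1 : y < 1 := hy.2
    have d1 := hasDerivAt_rogersL (Set.mem_Ioo.2 ⟨hy0, hy1⟩)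
    have d2 : HasDerivAt (fun z : ℝ => rogersL (1 - z))
        (-(Real.log (1 - (1 - y)) / (1 - y) + Real.log (1 - y) / (1 - (1 - y))) / 2 * (-1)) y := by
      have hinner : HasDerivAt (fun z : ℝ => 1 - z) (-1) y := by
        simpa using (hasDerivAt_id y).const_sub (1:ℝ)
      exact (hasDerivAt_rogersL (Set.mem_Ioo.2 ⟨by linarith, by linarith⟩)).comp y hinner
    have hsum := d1.add d2
    have : -(Real.log (1 - y) / y + Real.log y / (1 - y)) / 2 +
        -(Real.log (1 - (1 - y)) / (1 - y) + Real.log (1 - y) / (1 - (1 - y))) / 2 * (-1) = 0 := by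
      rw [show (1:ℝ) - (1 - y) = y by ring]
      ring
    rw [this] at hsum
    exact hsum.hasDerivWithinAt
  have hgx : g 1 = g x :=
    constant_of_has_deriv_right_zero hcont hderiv 1 (by constructor <;> linarith)
  have hval : g 1 = π ^ 2 / 6 := by
    simp only [hg]
    simp [rogersL_zero, rogersL_one]
  have : g x = π ^ 2 / 6 := hgx ▸ hval
  simpa [hg] using this

lemma rogersL_fiveterm {x y : ℝ} (hx0 : 0 < x) (hx1 : x < 1) (hy0 : 0 < y) (hy1 : y < 1) :
    rogersL x + rogersL y + rogersL (1 - x * y) + rogersL ((1 - x) / (1 - x * y)) +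
      rogersL ((1 - y) / (1 - x * y)) = π ^ 2 / 2 := by
  set Φ : ℝ → ℝ := fun t => rogersL t + rogersL y + rogersL (1 - t * y) +
      rogersL ((1 - t) / (1 - t * y)) + rogersL ((1 - y) / (1 - t * y)) with hΦ
  have hden : ∀ t : ℝ, x ≤ t → t ≤ 1 → 0 < 1 - t * y := by
    intro t ht1 ht2
    nlinarith
  have hcont : ContinuousOn Φ (Icc x 1) := by
    have hc1 : ContinuousOn (fun t : ℝ => 1 - t * y) (Icc x 1) :=
      (continuous_const.sub (continuous_id.mul continuous_const)).continuousOn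
    have hc2 : ContinuousOn (fun t : ℝ => (1 - t) / (1 - t * y)) (Icc x 1) := by
      apply ContinuousOn.div ((continuous_const.sub continuous_id).continuousOn) hc1
      intro t ht; exact ne_of_gt (hden t ht.1 ht.2)
    have hc3 : ContinuousOn (fun t : ℝ => (1 - y) / (1 - t * y)) (Icc x 1) := by
      apply ContinuousOn.div continuous_const.continuousOn hc1
      intro t ht; exact ne_of_gt (hden t ht.1 ht.2)
    apply ContinuousOn.add
    apply ContinuousOn.add
    apply ContinuousOn.add
    apply ContinuousOn.add
    · exact continuousOn_rogersL.mono (fun t ht => ⟨le_trans hx0.le ht.1, ht.2⟩)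
    · exact continuousOn_const
    · apply continuousOn_rogersL.comp hc1
      intro t ht
      have hd := hden t ht.1 ht.2
      have h0t : 0 < t := lt_of_lt_of_le hx0 ht.1
      refine ⟨?_, ?_⟩
      · show (0:ℝ) ≤ 1 - t * y
        linarith
      · show 1 - t * y ≤ 1
        nlinarith
    · apply continuousOn_rogersL.comp hc2
      intro t ht
      have hd := hden t ht.1 ht.2
      have h0t : 0 < t := lt_of_lt_of_le hx0 ht.1
      constructor
      · apply div_nonneg (by linarith [ht.2]) hd.le
      · rw [div_le_one hd]
        nlinarith [ht.2]
    · apply continuousOn_rogersL.comp hc3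
      intro t ht
      have hd := hden t ht.1 ht.2
      constructor
      · apply div_nonneg (by linarith) hd.le
      · rw [div_le_one hd]
        nlinarith [ht.2]
  have hderiv : ∀ t ∈ Ico x 1, HasDerivWithinAt Φ 0 (Ici t) t := by
    intro t ht
    have h0t : 0 < t := lt_of_lt_of_le hx0 ht.1
    have h1t : t < 1 := ht.2
    have hd : 0 < 1 - t * y := hden t ht.1 ht.2.le
    have hdne : (1 : ℝ) - t * y ≠ 0 := ne_of_gt hd
    -- memberships
    have hm3 : 1 - t * y ∈ Ioo (0:ℝ) 1 := ⟨hd, by nlinarith⟩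
    have hm4 : (1 - t) / (1 - t * y) ∈ Ioo (0:ℝ) 1 := by
      constructor
      · apply div_pos (by linarith) hd
      · rw [div_lt_one hd]; nlinarith
    have hm5 : (1 - y) / (1 - t * y) ∈ Ioo (0:ℝ) 1 := by
      constructor
      · apply div_pos (by linarith) hd
      · rw [div_lt_one hd]; nlinarith
    -- derivatives
    have h1 := hasDerivAt_rogersL (Set.mem_Ioo.2 ⟨h0t, h1t⟩)
    have h2 : HasDerivAt (fun _ : ℝ => rogersL y) 0 t := hasDerivAt_const t _
    have i3 : HasDerivAt (fun s : ℝ => 1 - s * y) (-y) t := by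
      simpa using ((hasDerivAt_id t).mul_const y).const_sub (1:ℝ)
    have h3 := (hasDerivAt_rogersL hm3).comp t i3
    have i1 : HasDerivAt (fun s : ℝ => 1 - s) (-1) t := by
      simpa using (hasDerivAt_id t).const_sub (1:ℝ)
    have i4 : HasDerivAt (fun s : ℝ => (1 - s) / (1 - s * y))
        (((-1) * (1 - t * y) - (1 - t) * (-y)) / (1 - t * y) ^ 2) t := i1.div i3 hdne
    have h4 := (hasDerivAt_rogersL hm4).comp t i4
    have i5 : HasDerivAt (fun s : ℝ => (1 - y) / (1 - s * y))
        ((0 * (1 - t * y) - (1 - y) * (-y)) / (1 - t * y) ^ 2) t :=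
      (hasDerivAt_const t (1 - y)).div i3 hdne
    have h5 := (hasDerivAt_rogersL hm5).comp t i5
    have hsum := (((h1.add h2).add h3).add h4).add h5
    have hzero :
        -(Real.log (1 - t) / t + Real.log t / (1 - t)) / 2 + 0 +
        (-(Real.log (1 - (1 - t * y)) / (1 - t * y) +
            Real.log (1 - t * y) / (1 - (1 - t * y))) / 2) * (-y) +
        (-(Real.log (1 - (1 - t) / (1 - t * y)) / ((1 - t) / (1 - t * y)) +
            Real.log ((1 - t) / (1 - t * y)) / (1 - (1 - t) / (1 - t * y))) / 2) *
          (((-1) * (1 - t * y) - (1 - t) * (-y)) / (1 - t * y) ^ 2) +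
        (-(Real.log (1 - (1 - y) / (1 - t * y)) / ((1 - y) / (1 - t * y)) +
            Real.log ((1 - y) / (1 - t * y)) / (1 - (1 - y) / (1 - t * y))) / 2) *
          ((0 * (1 - t * y) - (1 - y) * (-y)) / (1 - t * y) ^ 2) = 0 := by
      have e1 : 1 - (1 - t * y) = t * y := by ring
      have e2 : 1 - (1 - t) / (1 - t * y) = t * (1 - y) / (1 - t * y) := by
        field_simp
        ring
      have e3 : 1 - (1 - y) / (1 - t * y) = y * (1 - t) / (1 - t * y) := by
        rw [eq_div_iff hdne, sub_mul, div_mul_cancel₀ _ hdne]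
        ring
      rw [e1, e2, e3]
      have hts : (0:ℝ) < 1 - t := by linarith
      have hys : (0:ℝ) < 1 - y := by linarith
      rw [Real.log_mul (ne_of_gt h0t) (ne_of_gt hy0),
        Real.log_div (mul_ne_zero (ne_of_gt h0t) (ne_of_gt hys)) hdne,
        Real.log_div (ne_of_gt hts) hdne,
        Real.log_div (mul_ne_zero (ne_of_gt hy0) (ne_of_gt hts)) hdne,
        Real.log_div (ne_of_gt hys) hdne,
        Real.log_mul (ne_of_gt h0t) (ne_of_gt hys),
        Real.log_mul (ne_of_gt hy0) (ne_of_gt hts)]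
      field_simp
      ring
    rw [hzero] at hsum
    exact hsum.hasDerivWithinAt
  have hgx : Φ 1 = Φ x :=
    constant_of_has_deriv_right_zero hcont hderiv 1 (by constructor <;> linarith)
  have hval : Φ 1 = π ^ 2 / 2 := by
    have hy' : (1:ℝ) - y ≠ 0 := by linarith
    have hrefl := rogersL_reflection (le_of_lt hy0) (le_of_lt hy1)
    simp only [hΦ]
    rw [show (1:ℝ) - 1 * y = 1 - y by ring, show ((1:ℝ) - 1) = (0:ℝ) by ring,
      zero_div, div_self hy']
    rw [rogersL_zero, rogersL_one]
    linarith
  have : Φ x = π ^ 2 / 2 := hgx ▸ hval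
  simpa [hΦ] using this

lemma rogersL_reflection' {x y : ℝ} (h0 : 0 ≤ x) (h1 : x ≤ 1) (hy : y = 1 - x) :
    rogersL x + rogersL y = Real.pi ^ 2 / 6 := by
  subst hy; exact rogersL_reflection h0 h1

lemma rogersL_fiveterm' {x y u v w : ℝ} (hx0 : 0 < x) (hx1 : x < 1) (hy0 : 0 < y) (hy1 : y < 1)
    (hu : 1 - x * y = u) (hv : v = (1 - x) / u) (hw : w = (1 - y) / u) :
    rogersL x + rogersL y + rogersL u + rogersL v + rogersL w = Real.pi ^ 2 / 2 := by
  subst hu; subst hv; subst hw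
  exact rogersL_fiveterm hx0 hx1 hy0 hy1

lemma ladder_inst_1 (j : ℝ) (hcube : j ^ 3 = 3 * j ^ 2 - 1) (hb1 : (0.6527 : ℝ) < j)
    (hb2 : j < (0.652705 : ℝ)) (hs1 : (0.426017 : ℝ) < j ^ 2) (hs2 : j ^ 2 < (0.426024 : ℝ)) :
    rogersL (3 - 7*j^2) + rogersL (-2 + 7*j^2) = Real.pi ^ 2 / 6 := by
  apply rogersL_reflection' (by linarith) (by linarith)
  ring

lemma ladder_inst_2 (j : ℝ) (hcube : j ^ 3 = 3 * j ^ 2 - 1) (hb1 : (0.6527 : ℝ) < j)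
    (hb2 : j < (0.652705 : ℝ)) (hs1 : (0.426017 : ℝ) < j ^ 2) (hs2 : j ^ 2 < (0.426024 : ℝ)) :
    rogersL ((2/3) + (-2/3)*j + (-1/3)*j^2) + rogersL ((1/3) + (2/3)*j + (1/3)*j^2) = Real.pi ^ 2 / 6 := by
  apply rogersL_reflection' (by linarith) (by linarith)
  ring

lemma ladder_inst_3 (j : ℝ) (hcube : j ^ 3 = 3 * j ^ 2 - 1) (hb1 : (0.6527 : ℝ) < j)
    (hb2 : j < (0.652705 : ℝ)) (hs1 : (0.426017 : ℝ) < j ^ 2) (hs2 : j ^ 2 < (0.426024 : ℝ)) :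
    rogersL (1 - 2*j + j^2) + rogersL (2*j - 1*j^2) = Real.pi ^ 2 / 6 := by
  apply rogersL_reflection' (by linarith) (by linarith)
  ring

lemma ladder_inst_4 (j : ℝ) (hcube : j ^ 3 = 3 * j ^ 2 - 1) (hb1 : (0.6527 : ℝ) < j)
    (hb2 : j < (0.652705 : ℝ)) (hs1 : (0.426017 : ℝ) < j ^ 2) (hs2 : j ^ 2 < (0.426024 : ℝ)) :
    rogersL ((2/3) - 1*j + (1/3)*j^2) + rogersL ((1/3) + j + (-1/3)*j^2) = Real.pi ^ 2 / 6 := by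
  apply rogersL_reflection' (by linarith) (by linarith)
  ring

lemma ladder_inst_5 (j : ℝ) (hcube : j ^ 3 = 3 * j ^ 2 - 1) (hb1 : (0.6527 : ℝ) < j)
    (hb2 : j < (0.652705 : ℝ)) (hs1 : (0.426017 : ℝ) < j ^ 2) (hs2 : j ^ 2 < (0.426024 : ℝ)) :
    rogersL (-2 + 4*j - 1*j^2) + rogersL (3 - 4*j + j^2) = Real.pi ^ 2 / 6 := by
  apply rogersL_reflection' (by linarith) (by linarith)
  ring

lemma ladder_inst_6 (j : ℝ) (hcube : j ^ 3 = 3 * j ^ 2 - 1) (hb1 : (0.6527 : ℝ) < j)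
    (hb2 : j < (0.652705 : ℝ)) (hs1 : (0.426017 : ℝ) < j ^ 2) (hs2 : j ^ 2 < (0.426024 : ℝ)) :
    rogersL (-1*j + 2*j^2) + rogersL (1 + j - 2*j^2) = Real.pi ^ 2 / 6 := by
  apply rogersL_reflection' (by linarith) (by linarith)
  ring

lemma ladder_inst_7 (j : ℝ) (hcube : j ^ 3 = 3 * j ^ 2 - 1) (hb1 : (0.6527 : ℝ) < j)
    (hb2 : j < (0.652705 : ℝ)) (hs1 : (0.426017 : ℝ) < j ^ 2) (hs2 : j ^ 2 < (0.426024 : ℝ)) :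
    rogersL (j - 1*j^2) + rogersL (1 - 1*j + j^2) = Real.pi ^ 2 / 6 := by
  apply rogersL_reflection' (by linarith) (by linarith)
  ring

lemma ladder_inst_8 (j : ℝ) (hcube : j ^ 3 = 3 * j ^ 2 - 1) (hb1 : (0.6527 : ℝ) < j)
    (hb2 : j < (0.652705 : ℝ)) (hs1 : (0.426017 : ℝ) < j ^ 2) (hs2 : j ^ 2 < (0.426024 : ℝ)) :
    rogersL ((1/3) + (-1/3)*j + (1/3)*j^2) + rogersL ((2/3) + (1/3)*j + (-1/3)*j^2) = Real.pi ^ 2 / 6 := by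
  apply rogersL_reflection' (by linarith) (by linarith)
  ring

lemma ladder_inst_9 (j : ℝ) (hcube : j ^ 3 = 3 * j ^ 2 - 1) (hb1 : (0.6527 : ℝ) < j)
    (hb2 : j < (0.652705 : ℝ)) (hs1 : (0.426017 : ℝ) < j ^ 2) (hs2 : j ^ 2 < (0.426024 : ℝ)) :
    rogersL (4 - 7*j + 2*j^2) + rogersL (-3 + 7*j - 2*j^2) = Real.pi ^ 2 / 6 := by
  apply rogersL_reflection' (by linarith) (by linarith)
  ring

lemma ladder_inst_10 (j : ℝ) (hcube : j ^ 3 = 3 * j ^ 2 - 1) (hb1 : (0.6527 : ℝ) < j)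
    (hb2 : j < (0.652705 : ℝ)) (hs1 : (0.426017 : ℝ) < j ^ 2) (hs2 : j ^ 2 < (0.426024 : ℝ)) :
    rogersL (1 - 1*j) + rogersL j = Real.pi ^ 2 / 6 := by
  apply rogersL_reflection' (by linarith) (by linarith)
  ring

lemma ladder_inst_11 (j : ℝ) (hcube : j ^ 3 = 3 * j ^ 2 - 1) (hb1 : (0.6527 : ℝ) < j)
    (hb2 : j < (0.652705 : ℝ)) (hs1 : (0.426017 : ℝ) < j ^ 2) (hs2 : j ^ 2 < (0.426024 : ℝ)) :
    rogersL ((-1/3) + (4/3)*j + (-1/3)*j^2) + rogersL ((4/3) + (-4/3)*j + (1/3)*j^2) = Real.pi ^ 2 / 6 := by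
  apply rogersL_reflection' (by linarith) (by linarith)
  ring

lemma ladder_inst_12 (j : ℝ) (hcube : j ^ 3 = 3 * j ^ 2 - 1) (hb1 : (0.6527 : ℝ) < j)
    (hb2 : j < (0.652705 : ℝ)) (hs1 : (0.426017 : ℝ) < j ^ 2) (hs2 : j ^ 2 < (0.426024 : ℝ)) :
    rogersL (j^2) + rogersL (1 - 1*j^2) = Real.pi ^ 2 / 6 := by
  apply rogersL_reflection' (by linarith) (by linarith)
  ring

lemma ladder_inst_13 (j : ℝ) (hcube : j ^ 3 = 3 * j ^ 2 - 1) (hb1 : (0.6527 : ℝ) < j)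
    (hb2 : j < (0.652705 : ℝ)) (hs1 : (0.426017 : ℝ) < j ^ 2) (hs2 : j ^ 2 < (0.426024 : ℝ)) :
    rogersL (2 - 3*j + j^2) + rogersL (-1 + 3*j - 1*j^2) = Real.pi ^ 2 / 6 := by
  apply rogersL_reflection' (by linarith) (by linarith)
  ring

lemma ladder_inst_14 (j : ℝ) (hcube : j ^ 3 = 3 * j ^ 2 - 1) (hb1 : (0.6527 : ℝ) < j)
    (hb2 : j < (0.652705 : ℝ)) (hs1 : (0.426017 : ℝ) < j ^ 2) (hs2 : j ^ 2 < (0.426024 : ℝ)) :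
    rogersL ((2/3) + (-2/3)*j + (-1/3)*j^2) + rogersL (-1*j + 2*j^2) + rogersL (-2 + 7*j^2) + rogersL ((-4/3) + (13/3)*j + (-4/3)*j^2) +
      rogersL (3 - 4*j + j^2) = Real.pi ^ 2 / 2 := by
  apply rogersL_fiveterm' (by linarith) (by linarith) (by linarith) (by linarith)
  · linear_combination (3 + (2/3)*j) * hcube
  · rw [eq_div_iff (ne_of_gt (by linarith : (0:ℝ) < -2 + 7*j^2))]
    linear_combination ((7/3) + (-28/3)*j) * hcube
  · rw [eq_div_iff (ne_of_gt (by linarith : (0:ℝ) < -2 + 7*j^2))]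
    linear_combination (-7 + 7*j) * hcube

lemma ladder_inst_15 (j : ℝ) (hcube : j ^ 3 = 3 * j ^ 2 - 1) (hb1 : (0.6527 : ℝ) < j)
    (hb2 : j < (0.652705 : ℝ)) (hs1 : (0.426017 : ℝ) < j ^ 2) (hs2 : j ^ 2 < (0.426024 : ℝ)) :
    rogersL (1 - 2*j + j^2) + rogersL (4 - 7*j + 2*j^2) + rogersL (-8 + 17*j - 5*j^2) + rogersL ((1/3) + (2/3)*j + (1/3)*j^2) +
      rogersL ((2/3) + (1/3)*j + (-1/3)*j^2) = Real.pi ^ 2 / 2 := by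
  apply rogersL_fiveterm' (by linarith) (by linarith) (by linarith) (by linarith)
  · linear_combination (5 - 2*j) * hcube
  · rw [eq_div_iff (ne_of_gt (by linarith : (0:ℝ) < -8 + 17*j - 5*j^2))]
    linear_combination ((-8/3) + (-5/3)*j) * hcube
  · rw [eq_div_iff (ne_of_gt (by linarith : (0:ℝ) < -8 + 17*j - 5*j^2))]
    linear_combination ((-7/3) + (5/3)*j) * hcube

lemma ladder_inst_16 (j : ℝ) (hcube : j ^ 3 = 3 * j ^ 2 - 1) (hb1 : (0.6527 : ℝ) < j)
    (hb2 : j < (0.652705 : ℝ)) (hs1 : (0.426017 : ℝ) < j ^ 2) (hs2 : j ^ 2 < (0.426024 : ℝ)) :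
    rogersL (1 - 2*j + j^2) + rogersL (j^2) + rogersL (2 + j - 4*j^2) + rogersL ((-4/3) + (13/3)*j + (-4/3)*j^2) +
      rogersL ((4/3) + (-4/3)*j + (1/3)*j^2) = Real.pi ^ 2 / 2 := by
  apply rogersL_fiveterm' (by linarith) (by linarith) (by linarith) (by linarith)
  · linear_combination (-1 - 1*j) * hcube
  · rw [eq_div_iff (ne_of_gt (by linarith : (0:ℝ) < 2 + j - 4*j^2))]
    linear_combination ((-8/3) + (16/3)*j) * hcube
  · rw [eq_div_iff (ne_of_gt (by linarith : (0:ℝ) < 2 + j - 4*j^2))]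
    linear_combination ((5/3) + (-4/3)*j) * hcube

lemma ladder_inst_17 (j : ℝ) (hcube : j ^ 3 = 3 * j ^ 2 - 1) (hb1 : (0.6527 : ℝ) < j)
    (hb2 : j < (0.652705 : ℝ)) (hs1 : (0.426017 : ℝ) < j ^ 2) (hs2 : j ^ 2 < (0.426024 : ℝ)) :
    rogersL ((2/3) - 1*j + (1/3)*j^2) + rogersL (2 - 3*j + j^2) + rogersL ((-4/3) + (13/3)*j + (-4/3)*j^2) + rogersL ((1/3) + (2/3)*j + (1/3)*j^2) +
      rogersL (1 - 1*j^2) = Real.pi ^ 2 / 2 := by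
  apply rogersL_fiveterm' (by linarith) (by linarith) (by linarith) (by linarith)
  · linear_combination (1 + (-1/3)*j) * hcube
  · rw [eq_div_iff (ne_of_gt (by linarith : (0:ℝ) < (-4/3) + (13/3)*j + (-4/3)*j^2))]
    linear_combination ((-7/9) + (-4/9)*j) * hcube
  · rw [eq_div_iff (ne_of_gt (by linarith : (0:ℝ) < (-4/3) + (13/3)*j + (-4/3)*j^2))]
    linear_combination ((-1/3) + (4/3)*j) * hcube

lemma ladder_inst_18 (j : ℝ) (hcube : j ^ 3 = 3 * j ^ 2 - 1) (hb1 : (0.6527 : ℝ) < j)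
    (hb2 : j < (0.652705 : ℝ)) (hs1 : (0.426017 : ℝ) < j ^ 2) (hs2 : j ^ 2 < (0.426024 : ℝ)) :
    rogersL (-2 + 4*j - 1*j^2) + rogersL (-2 + 4*j - 1*j^2) + rogersL (-8 + 17*j - 5*j^2) + rogersL ((1/3) + j + (-1/3)*j^2) +
      rogersL ((1/3) + j + (-1/3)*j^2) = Real.pi ^ 2 / 2 := by
  apply rogersL_fiveterm' (by linarith) (by linarith) (by linarith) (by linarith)
  · linear_combination (5 - 1*j) * hcube
  · rw [eq_div_iff (ne_of_gt (by linarith : (0:ℝ) < -8 + 17*j - 5*j^2))]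
    linear_combination ((-17/3) + (5/3)*j) * hcube
  · rw [eq_div_iff (ne_of_gt (by linarith : (0:ℝ) < -8 + 17*j - 5*j^2))]
    linear_combination ((-17/3) + (5/3)*j) * hcube

lemma ladder_inst_19 (j : ℝ) (hcube : j ^ 3 = 3 * j ^ 2 - 1) (hb1 : (0.6527 : ℝ) < j)
    (hb2 : j < (0.652705 : ℝ)) (hs1 : (0.426017 : ℝ) < j ^ 2) (hs2 : j ^ 2 < (0.426024 : ℝ)) :
    rogersL (-2 + 4*j - 1*j^2) + rogersL ((-1/3) + (4/3)*j + (-1/3)*j^2) + rogersL ((-4/3) + (13/3)*j + (-4/3)*j^2) + rogersL (2*j - 1*j^2) +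
      rogersL j = Real.pi ^ 2 / 2 := by
  apply rogersL_fiveterm' (by linarith) (by linarith) (by linarith) (by linarith)
  · linear_combination ((5/3) + (-1/3)*j) * hcube
  · rw [eq_div_iff (ne_of_gt (by linarith : (0:ℝ) < (-4/3) + (13/3)*j + (-4/3)*j^2))]
    linear_combination (-3 + (4/3)*j) * hcube
  · rw [eq_div_iff (ne_of_gt (by linarith : (0:ℝ) < (-4/3) + (13/3)*j + (-4/3)*j^2))]
    linear_combination ((-4/3)) * hcube

lemma ladder_inst_20 (j : ℝ) (hcube : j ^ 3 = 3 * j ^ 2 - 1) (hb1 : (0.6527 : ℝ) < j)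
    (hb2 : j < (0.652705 : ℝ)) (hs1 : (0.426017 : ℝ) < j ^ 2) (hs2 : j ^ 2 < (0.426024 : ℝ)) :
    rogersL (-1*j + 2*j^2) + rogersL ((2/3) + (-1/3)*j) + rogersL ((1/3) + (2/3)*j + (1/3)*j^2) + rogersL (2*j - 1*j^2) +
      rogersL ((4/3) + (-4/3)*j + (1/3)*j^2) = Real.pi ^ 2 / 2 := by
  apply rogersL_fiveterm' (by linarith) (by linarith) (by linarith) (by linarith)
  · linear_combination ((2/3)) * hcube
  · rw [eq_div_iff (ne_of_gt (by linarith : (0:ℝ) < (1/3) + (2/3)*j + (1/3)*j^2))]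
    linear_combination (-1 + (-1/3)*j) * hcube
  · rw [eq_div_iff (ne_of_gt (by linarith : (0:ℝ) < (1/3) + (2/3)*j + (1/3)*j^2))]
    linear_combination ((1/9) + (1/9)*j) * hcube

lemma ladder_inst_21 (j : ℝ) (hcube : j ^ 3 = 3 * j ^ 2 - 1) (hb1 : (0.6527 : ℝ) < j)
    (hb2 : j < (0.652705 : ℝ)) (hs1 : (0.426017 : ℝ) < j ^ 2) (hs2 : j ^ 2 < (0.426024 : ℝ)) :
    rogersL (j - 1*j^2) + rogersL (j - 1*j^2) + rogersL (2 + j - 4*j^2) + rogersL (3 - 4*j + j^2) +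
      rogersL (3 - 4*j + j^2) = Real.pi ^ 2 / 2 := by
  apply rogersL_fiveterm' (by linarith) (by linarith) (by linarith) (by linarith)
  · linear_combination (-1 - 1*j) * hcube
  · rw [eq_div_iff (ne_of_gt (by linarith : (0:ℝ) < 2 + j - 4*j^2))]
    linear_combination (5 - 4*j) * hcube
  · rw [eq_div_iff (ne_of_gt (by linarith : (0:ℝ) < 2 + j - 4*j^2))]
    linear_combination (5 - 4*j) * hcube

lemma ladder_inst_22 (j : ℝ) (hcube : j ^ 3 = 3 * j ^ 2 - 1) (hb1 : (0.6527 : ℝ) < j)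
    (hb2 : j < (0.652705 : ℝ)) (hs1 : (0.426017 : ℝ) < j ^ 2) (hs2 : j ^ 2 < (0.426024 : ℝ)) :
    rogersL (j - 1*j^2) + rogersL (-1 + 3*j - 1*j^2) + rogersL (2*j - 1*j^2) + rogersL (2*j - 1*j^2) +
      rogersL (-1 + 3*j - 1*j^2) = Real.pi ^ 2 / 2 := by
  apply rogersL_fiveterm' (by linarith) (by linarith) (by linarith) (by linarith)
  · linear_combination (1 - 1*j) * hcube
  · rw [eq_div_iff (ne_of_gt (by linarith : (0:ℝ) < 2*j - 1*j^2))]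
    linear_combination (-1 + j) * hcube
  · rw [eq_div_iff (ne_of_gt (by linarith : (0:ℝ) < 2*j - 1*j^2))]
    linear_combination (-2 + j) * hcube

lemma ladder_inst_23 (j : ℝ) (hcube : j ^ 3 = 3 * j ^ 2 - 1) (hb1 : (0.6527 : ℝ) < j)
    (hb2 : j < (0.652705 : ℝ)) (hs1 : (0.426017 : ℝ) < j ^ 2) (hs2 : j ^ 2 < (0.426024 : ℝ)) :
    rogersL ((1/3) + (-1/3)*j + (1/3)*j^2) + rogersL (4 - 7*j + 2*j^2) + rogersL ((-4/3) + (13/3)*j + (-4/3)*j^2) + rogersL (1 + j - 2*j^2) +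
      rogersL (1 - 1*j + j^2) = Real.pi ^ 2 / 2 := by
  apply rogersL_fiveterm' (by linarith) (by linarith) (by linarith) (by linarith)
  · linear_combination (1 + (-2/3)*j) * hcube
  · rw [eq_div_iff (ne_of_gt (by linarith : (0:ℝ) < (-4/3) + (13/3)*j + (-4/3)*j^2))]
    linear_combination (-2 + (8/3)*j) * hcube
  · rw [eq_div_iff (ne_of_gt (by linarith : (0:ℝ) < (-4/3) + (13/3)*j + (-4/3)*j^2))]
    linear_combination ((5/3) + (-4/3)*j) * hcube

lemma ladder_inst_24 (j : ℝ) (hcube : j ^ 3 = 3 * j ^ 2 - 1) (hb1 : (0.6527 : ℝ) < j)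
    (hb2 : j < (0.652705 : ℝ)) (hs1 : (0.426017 : ℝ) < j ^ 2) (hs2 : j ^ 2 < (0.426024 : ℝ)) :
    rogersL ((1/3) + (-1/3)*j + (1/3)*j^2) + rogersL (1 - 1*j) + rogersL ((1/3) + (2/3)*j + (1/3)*j^2) + rogersL (3 - 4*j + j^2) +
      rogersL (-3 + 7*j - 2*j^2) = Real.pi ^ 2 / 2 := by
  apply rogersL_fiveterm' (by linarith) (by linarith) (by linarith) (by linarith)
  · linear_combination ((1/3)) * hcube
  · rw [eq_div_iff (ne_of_gt (by linarith : (0:ℝ) < (1/3) + (2/3)*j + (1/3)*j^2))]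
    linear_combination ((1/3) + (1/3)*j) * hcube
  · rw [eq_div_iff (ne_of_gt (by linarith : (0:ℝ) < (1/3) + (2/3)*j + (1/3)*j^2))]
    linear_combination (-1 + (-2/3)*j) * hcube

lemma ladder_inst_25 (j : ℝ) (hcube : j ^ 3 = 3 * j ^ 2 - 1) (hb1 : (0.6527 : ℝ) < j)
    (hb2 : j < (0.652705 : ℝ)) (hs1 : (0.426017 : ℝ) < j ^ 2) (hs2 : j ^ 2 < (0.426024 : ℝ)) :
    rogersL ((1/3) + (-1/3)*j + (1/3)*j^2) + rogersL (2 - 3*j + j^2) + rogersL (2*j - 1*j^2) + rogersL ((1/3) + j + (-1/3)*j^2) +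
      rogersL ((4/3) + (-4/3)*j + (1/3)*j^2) = Real.pi ^ 2 / 2 := by
  apply rogersL_fiveterm' (by linarith) (by linarith) (by linarith) (by linarith)
  · linear_combination ((1/3) + (-1/3)*j) * hcube
  · rw [eq_div_iff (ne_of_gt (by linarith : (0:ℝ) < 2*j - 1*j^2))]
    linear_combination ((-2/3) + (1/3)*j) * hcube
  · rw [eq_div_iff (ne_of_gt (by linarith : (0:ℝ) < 2*j - 1*j^2))]
    linear_combination (1 + (-1/3)*j) * hcube

lemma ladder_inst_26 (j : ℝ) (hcube : j ^ 3 = 3 * j ^ 2 - 1) (hb1 : (0.6527 : ℝ) < j)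
    (hb2 : j < (0.652705 : ℝ)) (hs1 : (0.426017 : ℝ) < j ^ 2) (hs2 : j ^ 2 < (0.426024 : ℝ)) :
    rogersL (1 - 1*j) + rogersL (1 - 1*j) + rogersL (2*j - 1*j^2) + rogersL ((2/3) + (1/3)*j + (-1/3)*j^2) +
      rogersL ((2/3) + (1/3)*j + (-1/3)*j^2) = Real.pi ^ 2 / 2 := by
  apply rogersL_fiveterm' (by linarith) (by linarith) (by linarith) (by linarith)
  · linear_combination (0) * hcube
  · rw [eq_div_iff (ne_of_gt (by linarith : (0:ℝ) < 2*j - 1*j^2))]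
    linear_combination ((1/3)*j) * hcube
  · rw [eq_div_iff (ne_of_gt (by linarith : (0:ℝ) < 2*j - 1*j^2))]
    linear_combination ((1/3)*j) * hcube

lemma ladder_inst_27 (j : ℝ) (hcube : j ^ 3 = 3 * j ^ 2 - 1) (hb1 : (0.6527 : ℝ) < j)
    (hb2 : j < (0.652705 : ℝ)) (hs1 : (0.426017 : ℝ) < j ^ 2) (hs2 : j ^ 2 < (0.426024 : ℝ)) :
    rogersL (1 - 1*j) + rogersL ((2/3) + (-1/3)*j) + rogersL ((1/3) + j + (-1/3)*j^2) + rogersL (1 - 1*j + j^2) +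
      rogersL j = Real.pi ^ 2 / 2 := by
  apply rogersL_fiveterm' (by linarith) (by linarith) (by linarith) (by linarith)
  · linear_combination (0) * hcube
  · rw [eq_div_iff (ne_of_gt (by linarith : (0:ℝ) < (1/3) + j + (-1/3)*j^2))]
    linear_combination ((1/3) + (-1/3)*j) * hcube
  · rw [eq_div_iff (ne_of_gt (by linarith : (0:ℝ) < (1/3) + j + (-1/3)*j^2))]
    linear_combination ((-1/3)) * hcube

set_option maxHeartbeats 1000000 in
/-- First identity of Theorem 1: `19·L(j) + L((1−j)³·j²) = 2π²` for `j = (1/2)·sec(2π/9)`. -/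
theorem theorem1_first (j : ℝ)
    (hj : j = 1 / 2 * (1 / Real.cos (2 * Real.pi / 9))) :
    19 * rogersL j + rogersL ((1 - j) ^ 3 * j ^ 2) = 2 * Real.pi ^ 2 := by
  set c := Real.cos (2 * Real.pi / 9) with hc
  have hpi := Real.pi_pos
  have hcub : 4 * c ^ 3 - 3 * c = -(1/2) := by
    have h3 : Real.cos (3 * (2 * Real.pi / 9)) = 4 * c ^ 3 - 3 * c := by
      rw [Real.cos_three_mul]
    have h9 : 3 * (2 * Real.pi / 9) = Real.pi - Real.pi / 3 := by ring
    rw [h9, Real.cos_pi_sub, Real.cos_pi_div_three] at h3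
    linarith
  have hclt : 1/2 < c := by
    have := Real.cos_lt_cos_of_nonneg_of_le_pi (by positivity) (by linarith)
      (by nlinarith : 2 * Real.pi / 9 < Real.pi / 3)
    rw [Real.cos_pi_div_three] at this
    exact this
  have hc1 : c < 1 := by
    by_contra hcon
    push_neg at hcon
    nlinarith [mul_nonneg (by linarith : (0:ℝ) ≤ c - 1) (sq_nonneg (2*c + 1))]
  have hc0 : 0 < c := by linarith
  have hjc : j = 1 / (2 * c) := by rw [hj]; ring
  have hj0 : 0 < j := by rw [hjc]; positivity
  have hcj : c = 1 / (2 * j) := by rw [hjc]; field_simp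
  have hcube : j ^ 3 = 3 * j ^ 2 - 1 := by
    have h := hcub
    rw [hcj] at h
    field_simp at h
    nlinarith [h]
  have hj1 : j < 1 := by
    rw [hjc, div_lt_one (by linarith)]
    linarith
  have hjhalf : 1/2 < j := by
    rw [hjc, lt_div_iff₀ (by linarith)]
    linarith
  have hb1 : (0.6527 : ℝ) < j := by
    by_contra hcon
    push_neg at hcon
    have h1 : (0:ℝ) ≤ 0.6527 - j := by linarith
    have h2 : (0:ℝ) ≤ 3*(j + 0.6527) - (j^2 + 0.6527*j + 0.6527^2) := by nlinarith
    nlinarith [mul_nonneg h1 h2]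
  have hb2 : j < (0.652705 : ℝ) := by
    by_contra hcon
    push_neg at hcon
    have h1 : (0:ℝ) ≤ j - 0.652705 := by linarith
    have h2 : (0:ℝ) ≤ 3*(j + 0.652705) - (j^2 + 0.652705*j + 0.652705^2) := by nlinarith
    nlinarith [mul_nonneg h1 h2]
  have hs1 : (0.426017 : ℝ) < j ^ 2 := by nlinarith
  have hs2 : j ^ 2 < (0.426024 : ℝ) := by nlinarith
  have htarget : (1 - j) ^ 3 * j ^ 2 = (3 - 7*j^2) := by
    linear_combination (-3 - 1*j^2) * hcube
  rw [htarget]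
  linarith [ladder_inst_1 j hcube hb1 hb2 hs1 hs2, ladder_inst_2 j hcube hb1 hb2 hs1 hs2, ladder_inst_3 j hcube hb1 hb2 hs1 hs2, ladder_inst_4 j hcube hb1 hb2 hs1 hs2, ladder_inst_5 j hcube hb1 hb2 hs1 hs2, ladder_inst_6 j hcube hb1 hb2 hs1 hs2, ladder_inst_7 j hcube hb1 hb2 hs1 hs2, ladder_inst_8 j hcube hb1 hb2 hs1 hs2, ladder_inst_9 j hcube hb1 hb2 hs1 hs2, ladder_inst_10 j hcube hb1 hb2 hs1 hs2, ladder_inst_11 j hcube hb1 hb2 hs1 hs2, ladder_inst_12 j hcube hb1 hb2 hs1 hs2, ladder_inst_13 j hcube hb1 hb2 hs1 hs2, ladder_inst_14 j hcube hb1 hb2 hs1 hs2, ladder_inst_15 j hcube hb1 hb2 hs1 hs2, ladder_inst_16 j hcube hb1 hb2 hs1 hs2, ladder_inst_17 j hcube hb1 hb2 hs1 hs2, ladder_inst_18 j hcube hb1 hb2 hs1 hs2, ladder_inst_19 j hcube hb1 hb2 hs1 hs2, ladder_inst_20 j hcube hb1 hb2 hs1 hs2, ladder_inst_21 j hcube hb1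 hb2 hs1 hs2, ladder_inst_22 j hcube hb1 hb2 hs1 hs2, ladder_inst_23 j hcube hb1 hb2 hs1 hs2, ladder_inst_24 j hcube hb1 hb2 hs1 hs2, ladder_inst_25 j hcube hb1 hb2 hs1 hs2, ladder_inst_26 j hcube hb1 hb2 hs1 hs2, ladder_inst_27 j hcube hb1 hb2 hs1 hs2]
end

section
/- Let j = (1/2)·sec(2π/9) and let w = 2√3·cos(5π/18) − 2. Then (1 − j)²/j = w/(w + 1) and (1 − j)³·j² = w³·(w + 2)/(2w + 1). -/
/-- Algebraic identities relating `j = (1/2)·sec(2π/9)` to `w = 2√3·cos(5π/18) − 2`. -/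
theorem j_w_relations (j w : ℝ)
    (hj : j = 1 / 2 * (1 / Real.cos (2 * Real.pi / 9)))
    (hw : w = 2 * Real.sqrt 3 * Real.cos (5 * Real.pi / 18) - 2) :
    (1 - j) ^ 2 / j = w / (w + 1) ∧
    (1 - j) ^ 3 * j ^ 2 = w ^ 3 * (w + 2) / (2 * w + 1) := by
  have hpi := Real.pi_pos
  set c := Real.cos (2 * Real.pi / 9) with hc
  -- the cubic for c
  have hg : 8 * c ^ 3 - 6 * c + 1 = 0 := by
    have h3 : Real.cos (3 * (2 * Real.pi / 9)) = 4 * c ^ 3 - 3 * c :=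
      Real.cos_three_mul _
    rw [show (3 : ℝ) * (2 * Real.pi / 9) = Real.pi - Real.pi / 3 by ring,
      Real.cos_pi_sub, Real.cos_pi_div_three] at h3
    linear_combination -2 * h3
  -- lower bounds for c
  have h14 : (1.4 : ℝ) ≤ Real.sqrt 2 := by
    nlinarith [Real.sq_sqrt (by norm_num : (0:ℝ) ≤ 2), Real.sqrt_nonneg 2]
  have hc7 : (0.7 : ℝ) ≤ c := by
    have h1 : Real.cos (Real.pi / 4) ≤ c := by
      apply Real.cos_le_cos_of_nonneg_of_le_pi (by positivity) (by linarith)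
      linarith
    rw [Real.cos_pi_div_four] at h1
    linarith
  have hc34 : (3 : ℝ) / 4 ≤ c := by
    by_contra hcon
    push_neg at hcon
    have h1 : (0:ℝ) < 3/4 - c := by linarith
    have h2 : (0:ℝ) < 8 * c ^ 2 + 6 * c - 1/2 := by nlinarith
    nlinarith [mul_pos h1 h2]
  have hc0 : c ≠ 0 := by linarith
  -- sin(2π/9) facts
  have hsnn : 0 ≤ Real.sin (2 * Real.pi / 9) :=
    Real.sin_nonneg_of_nonneg_of_le_pi (by positivity) (by linarith)
  have hs2 : Real.sin (2 * Real.pi / 9) ^ 2 = 1 - c ^ 2 := by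
    have := Real.sin_sq_add_cos_sq (2 * Real.pi / 9)
    linarith
  -- key: √3 sin(2π/9) = 4c² + c − 2
  have hrs : Real.sqrt 3 * Real.sin (2 * Real.pi / 9) = 4 * c ^ 2 + c - 2 := by
    have h3 : Real.sqrt 3 ^ 2 = 3 := Real.sq_sqrt (by norm_num)
    have hsq : (Real.sqrt 3 * Real.sin (2 * Real.pi / 9)) ^ 2
        = (4 * c ^ 2 + c - 2) ^ 2 := by
      linear_combination (Real.sin (2 * Real.pi / 9)) ^ 2 * h3 + 3 * hs2 +
        (-2 * c - 1) * hg
    have hA : 0 ≤ Real.sqrt 3 * Real.sin (2 * Real.pi / 9) :=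
      mul_nonneg (Real.sqrt_nonneg 3) hsnn
    have hB : 0 ≤ 4 * c ^ 2 + c - 2 := by nlinarith
    have hfac : (Real.sqrt 3 * Real.sin (2 * Real.pi / 9) - (4 * c ^ 2 + c - 2)) *
        (Real.sqrt 3 * Real.sin (2 * Real.pi / 9) + (4 * c ^ 2 + c - 2)) = 0 := by
      linear_combination hsq
    rcases mul_eq_zero.1 hfac with h | h
    · linarith
    · linarith
  -- rewrite w purely in terms of c
  have hw' : w = 8 * c ^ 2 + 2 * c - 6 := by
    rw [hw, show 5 * Real.pi / 18 = Real.pi / 2 - 2 * Real.pi / 9 by ring,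
      Real.cos_pi_div_two_sub]
    linear_combination 2 * hrs
  subst hw'
  -- rewrite j purely in terms of c
  have hjc : j = 1 / (2 * c) := by rw [hj]; ring
  subst hjc
  -- nonvanishing of denominators
  have hj0 : (1 : ℝ) / (2 * c) ≠ 0 := by positivity
  have hw1 : 8 * c ^ 2 + 2 * c - 6 + 1 ≠ 0 := by nlinarith
  have hw2 : 2 * (8 * c ^ 2 + 2 * c - 6) + 1 ≠ 0 := by nlinarith
  constructor
  · rw [div_eq_div_iff hj0 hw1]
    field_simp
    ring_nf
    linear_combination (4 * c - 5) * hg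
  · rw [eq_div_iff hw2]
    field_simp
    ring_nf
    linear_combination (-16384*c^10 - 16384*c^9 + 26624*c^8 + 22528*c^7 - 15680*c^6
      - 8768*c^5 + 3280*c^4 + 568*c^3 + 116*c^2 - 4*c + 11) * hg
end

section
/- Let j = (1/2)·sec(2π/9) and set α = (1 − j)³·j². Then j satisfies j³ − 3j² + 1 = 0, α satisfies α³ + 54α² − 57α + 1 = 0, and α is the smallest positive real root of the polynomial X³ + 54X² − 57X + 1. -/
/-- With `j = (1/2)·sec(2π/9)` and `α = (1−j)³·j²`: `j` satisfies `j³ − 3j² + 1 = 0`,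
`α` satisfies `α³ + 54α² − 57α + 1 = 0`, and `α` is the smallest positive real root
of `X³ + 54X² − 57X + 1`. -/
theorem j_alpha_minimal_polynomials (j α : ℝ)
    (hj : j = 1 / 2 * (1 / Real.cos (2 * Real.pi / 9)))
    (hα : α = (1 - j) ^ 3 * j ^ 2) :
    j ^ 3 - 3 * j ^ 2 + 1 = 0 ∧
    α ^ 3 + 54 * α ^ 2 - 57 * α + 1 = 0 ∧
    (0 < α ∧ ∀ y : ℝ, 0 < y → y ^ 3 + 54 * y ^ 2 - 57 * y + 1 = 0 → α ≤ y) := by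
  have hpi := Real.pi_pos
  set c := Real.cos (2 * Real.pi / 9) with hc
  -- triple angle
  have h3 : Real.cos (3 * (2 * Real.pi / 9)) = 4 * c ^ 3 - 3 * c := Real.cos_three_mul _
  have h23 : (3 : ℝ) * (2 * Real.pi / 9) = Real.pi - Real.pi / 3 := by ring
  have hval : Real.cos (3 * (2 * Real.pi / 9)) = -(1/2) := by
    rw [h23, Real.cos_pi_sub, Real.cos_pi_div_three]
  have hcube : 8 * c ^ 3 - 6 * c + 1 = 0 := by
    rw [hval] at h3; linarith
  -- bounds for c
  have hclt : c < 1 := by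
    have h := Real.cos_lt_cos_of_nonneg_of_le_pi (x := 0)
      (y := 2 * Real.pi / 9) le_rfl (by linarith) (by positivity)
    rwa [Real.cos_zero] at h
  have hcgt : 1/2 < c := by
    have h := Real.cos_lt_cos_of_nonneg_of_le_pi (x := 2 * Real.pi / 9)
      (y := Real.pi / 3) (by positivity) (by linarith) (by linarith)
    rwa [Real.cos_pi_div_three] at h
  have hcne : c ≠ 0 := by linarith
  -- j bounds
  have hj1 : j < 1 := by
    rw [hj, show (1:ℝ)/2 * (1/c) = 1/(2*c) by ring, div_lt_one (by linarith)]
    linarith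
  have hj0 : 1/2 < j := by
    rw [hj]
    rw [show (1:ℝ)/2 * (1/c) = 1/(2*c) by ring]
    rw [lt_div_iff₀ (by linarith)]
    nlinarith
  have hjc : j * (2 * c) = 1 := by rw [hj, show (1:ℝ)/2 * (1/c) * (2*c) = c / c by ring]; exact div_self hcne
  have hj3 : j ^ 3 - 3 * j ^ 2 + 1 = 0 := by
    have : j = 1 / (2 * c) := by rw [hj]; ring
    rw [this]
    field_simp
    nlinarith [hcube]
  have hα3 : α ^ 3 + 54 * α ^ 2 - 57 * α + 1 = 0 := by
    rw [hα]
    linear_combination (1 - 54 * j ^ 2 + 170 * j ^ 3 - 279 * j ^ 4 + 297 * j ^ 5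
      - 196 * j ^ 6 + 81 * j ^ 7 - 39 * j ^ 8 + 31 * j ^ 9 - 18 * j ^ 10
      + 6 * j ^ 11 - j ^ 12) * hj3
  have hαpos : 0 < α := by
    rw [hα]; have : 0 < 1 - j := by linarith
    positivity
  have hαsmall : α < 1 / 40 := by
    rw [hα]; nlinarith [sq_nonneg (j - 3/5), sq_nonneg j, sq_nonneg (1 - j),
      sq_nonneg (j * (1 - j)), sq_nonneg (j * (1-j) - 6/25)]
  refine ⟨hj3, hα3, hαpos, fun y hy hfy => ?_⟩
  by_contra hlt
  push_neg at hlt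
  nlinarith [hα3, hfy, mul_pos hy hαpos, sq_nonneg (y - α), sq_nonneg (y + α)]
end

section
/- Let j = (1/2)·sec(2π/9) and set α = (1 − j)³·j². Then j¹⁹ = (1 − α)³·α². -/
/-- With `j = (1/2)·sec(2π/9)` and `α = (1−j)³·j²`, one has `j¹⁹ = (1−α)³·α²`. -/
theorem j_pow_19 (j α : ℝ)
    (hj : j = 1 / 2 * (1 / Real.cos (2 * Real.pi / 9)))
    (hα : α = (1 - j) ^ 3 * j ^ 2) :
    j ^ 19 = (1 - α) ^ 3 * α ^ 2 := by
  have pi_pos := Real.pi_pos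
  set c := Real.cos (2 * Real.pi / 9) with hc
  have hcpos : 0 < c := by
    apply Real.cos_pos_of_mem_Ioo
    constructor <;> nlinarith [Real.pi_gt_three, Real.pi_lt_d2]
  have hcne : c ≠ 0 := ne_of_gt hcpos
  have htriple : 4 * c ^ 3 - 3 * c = -(1/2) := by
    have h3 : 3 * (2 * Real.pi / 9) = Real.pi - Real.pi / 3 := by ring
    have := Real.cos_three_mul (2 * Real.pi / 9)
    rw [h3, Real.cos_pi_sub, Real.cos_pi_div_three] at this
    linarith [this]
  have hcube : 8 * c ^ 3 - 6 * c + 1 = 0 := by linarith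
  subst hα hj
  field_simp
  linear_combination ((-1)*c^0 + (24)*c^1 + (-276)*c^2 + (1992)*c^3 + (-10080)*c^4 + (37728)*c^5 + (-107520)*c^6 + (233856)*c^7 + (-377088)*c^8 + (399872)*c^9 + (-116736)*c^10 + (-509952)*c^11 + (1167360)*c^12 + (-1302528)*c^13 + (638976)*c^14 + (393216)*c^15 + (-983040)*c^16 + (786432)*c^17 + (-262144)*c^18) * hcube
end

section
/- Let j = (1/2)·sec(2π/9), set α = (1 − j)³·j², and set u = (1 − j)²/j. Then u¹⁹·(1 − α)⁷ = α⁸. -/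
open Real

lemma cos_three_mul_two_pi_div_nine : cos (3 * (2 * π / 9)) = -(1 / 2) := by
  rw [show 3 * (2 * π / 9) = π - π / 3 by ring, cos_pi_sub, cos_pi_div_three]

lemma half_inv_cos_cubic_eq_zero {θ : ℝ} (h : cos (3 * θ) = -(1 / 2)) :
    (1 / 2 * (1 / cos θ)) ^ 3 - 3 * (1 / 2 * (1 / cos θ)) ^ 2 + 1 = 0 := by
  rw [cos_three_mul] at h
  have hc : cos θ ≠ 0 := by
    rintro hc
    rw [hc] at h
    norm_num at h
  field_simp
  linear_combination 2 * h

section CubicRoot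

variable {K : Type*} [Field K] {j : K}

lemma ne_zero_of_cubic_eq_zero (hj : j ^ 3 - 3 * j ^ 2 + 1 = 0) : j ≠ 0 := by
  rintro rfl
  norm_num at hj

lemma one_sub_ne_zero_of_cubic_eq_zero (hj : j ^ 3 - 3 * j ^ 2 + 1 = 0) : 1 - j ≠ 0 := by
  intro h
  rw [show j = 1 by linear_combination -h] at hj
  norm_num at hj

lemma sq_one_sub_mul_one_sub_of_cubic_eq_zero (hj : j ^ 3 - 3 * j ^ 2 + 1 = 0) :
    (1 - j) ^ 2 * (1 - (1 - j) ^ 3 * j ^ 2) = j ^ 5 := by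
  linear_combination (j ^ 2 - j + 1) ^ 2 * hj

lemma pow_nineteen_mul_pow_seven_of_cubic_eq_zero (hj : j ^ 3 - 3 * j ^ 2 + 1 = 0) :
    ((1 - j) ^ 2 / j) ^ 19 * (1 - (1 - j) ^ 3 * j ^ 2) ^ 7 = ((1 - j) ^ 3 * j ^ 2) ^ 8 := by
  have hk := one_sub_ne_zero_of_cubic_eq_zero hj
  have h1α : 1 - (1 - j) ^ 3 * j ^ 2 = j ^ 5 / (1 - j) ^ 2 := by
    rw [eq_div_iff (pow_ne_zero 2 hk), mul_comm]
    exact sq_one_sub_mul_one_sub_of_cubic_eq_zero hj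
  rw [h1α]
  field_simp [ne_zero_of_cubic_eq_zero hj]

end CubicRoot

/-- With `j = (1/2)·sec(2π/9)`, `α = (1−j)³·j²`, and `u = (1−j)²/j`, one has
`u¹⁹·(1−α)⁷ = α⁸`. -/
theorem u_pow_19 (j α u : ℝ)
    (hj : j = 1 / 2 * (1 / Real.cos (2 * Real.pi / 9)))
    (hα : α = (1 - j) ^ 3 * j ^ 2)
    (hu : u = (1 - j) ^ 2 / j) :
    u ^ 19 * (1 - α) ^ 7 = α ^ 8 := by
  have hcubic : j ^ 3 - 3 * j ^ 2 + 1 = 0 :=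
    hj ▸ half_inv_cos_cubic_eq_zero cos_three_mul_two_pi_div_nine
  subst hα hu
  exact pow_nineteen_mul_pow_seven_of_cubic_eq_zero hcubic
end
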